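/- Let 𝔗 be a BHT of a signal ((V,E), f) over a finite connected graph. If v ≺_T u (v is a strict ancestor of u in the BHT) and w lies in the same connected component as u in the sublevel graph G_t for some threshold t < f(𝔏(v)), then v ⪯_T w (v is an ancestor of w in the BHT). -/

import Mathlib

open scoped Classical

/-- A (multi)graph given by source and target maps on an edge type. -/
structure SigGraph (V E : Type*) where
  src : E → V
  tgt : E → V

namespace SigGraph

variable {V E : Type*} (G : SigGraph V E)

/-- `e` is an edge joining `x` and `y`. -/
def Ends (e : E) (x y : V) : Prop :=
  (G.src e = x ∧ G.tgt e = y) ∨ (G.src e = y ∧ G.tgt e = x)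

/-- The graph is connected. -/
def Connected : Prop :=
  ∀ a b : V, Relation.ReflTransGen (fun x y => ∃ e, G.Ends e x y) a b

/-- Extension of a vertex signal to vertices and edges, `f(e) = max f(V(e))`. -/
def sig (f : V → ℝ) : V ⊕ E → ℝ
  | .inl v => f v
  | .inr e => max (f (G.src e)) (f (G.tgt e))

/-- `pos` realizes a `G`-ordering: a total ordering of `V ⊕ E` along which the
signal is nondecreasing and every vertex precedes each edge incident to it. -/
def IsGOrdering (f : V → ℝ) (pos : V ⊕ E → ℕ) : Prop :=
  Function.Injective pos ∧
  (∀ a b, pos a ≤ pos b → G.sig f a ≤ G.sig f b) ∧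
  (∀ e : E, pos (.inl (G.src e)) < pos (.inr e) ∧ pos (.inl (G.tgt e)) < pos (.inr e))

/-- Connectivity within the subgraph `G_{<k}` of elements with position `< k`. -/
def ConnB (pos : V ⊕ E → ℕ) (k : ℕ) (a b : V) : Prop :=
  pos (.inl a) < k ∧ pos (.inl b) < k ∧
    Relation.ReflTransGen (fun x y => ∃ e, pos (.inr e) < k ∧ G.Ends e x y) a b

/-- `m` is the `≺`-minimum of the connected component of `v` in `G_{<k}`. -/
def IsCompMin (pos : V ⊕ E → ℕ) (k : ℕ) (m v : V) : Prop :=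
  G.ConnB pos k m v ∧ ∀ w, G.ConnB pos k v w → pos (.inl m) ≤ pos (.inl w)

/-- The `≺`-maximal endpoint of an edge. -/
def maxEnd (pos : V ⊕ E → ℕ) (e : E) : V :=
  if pos (.inl (G.src e)) ≤ pos (.inl (G.tgt e)) then G.tgt e else G.src e

/-- `(p, L)` is a basin hierarchy tree of the signal `(G, f)` with respect to the
`G`-ordering `pos`, rooted at the `≺`-minimal vertex `r`, with linking-vertex map `L`. -/
structure IsBHT (f : V → ℝ) (pos : V ⊕ E → ℕ) (r : V) (p : V → V) (L : V → V) : Prop where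
  ordering : G.IsGOrdering f pos
  root_min : ∀ v, pos (.inl r) ≤ pos (.inl v)
  root_fix : p r = r
  reaches : ∀ v, ∃ n, p^[n] v = r
  spec : ∀ v, v ≠ r → ∃ e : E,
    G.IsCompMin pos (pos (.inr e)) v v ∧
    G.IsCompMin pos (pos (.inr e) + 1) (p v) v ∧
    L v = G.maxEnd pos e

end SigGraph

/-- `u` is an ancestor of `v` in the tree with parent map `p` (`u ⪯_T v`). -/
def Anc {V : Type*} (p : V → V) (u v : V) : Prop := ∃ n, p^[n] v = u

/-- `f(𝔏(v))`, with value `+∞` at the root. -/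
noncomputable def fLink {V : Type*} (f : V → ℝ) (r : V) (L : V → V) (v : V) : EReal :=
  if v = r then ⊤ else (f (L v) : EReal)

/-- The persistence `pers(v) = f(𝔏(v)) - f(v)` of a vertex in a BHT. -/
noncomputable def persBHT {V : Type*} (f : V → ℝ) (r : V) (L : V → V) (v : V) : EReal :=
  fLink f r L v - (f v : EReal)

namespace SigGraph

variable {V E : Type*} (G : SigGraph V E)

/-- The component of `v` dies at the edge `e`: `v` is the minimum of its component
just before `e` is added, and no longer after. -/
def DiesAt (pos : V ⊕ E → ℕ) (v : V) (e : E) : Prop :=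
  G.IsCompMin pos (pos (.inr e)) v v ∧ ¬ G.IsCompMin pos (pos (.inr e) + 1) v v

/-- The death value of the component created by `v` (`+∞` if permanent). -/
noncomputable def deathVal (f : V → ℝ) (pos : V ⊕ E → ℕ) (v : V) : EReal :=
  if h : ∃ e, G.DiesAt pos v e then ((G.sig f (.inr h.choose) : ℝ) : EReal) else ⊤

/-- The degree-0 persistence diagram of `(G, f)`, as a multiset of intervals
`[birth, death)` (including trivial intervals). -/
noncomputable def PD0 [Fintype V] (f : V → ℝ) (pos : V ⊕ E → ℕ) : Multiset (EReal × EReal) :=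
  Finset.univ.val.map fun v : V => ((f v : EReal), G.deathVal f pos v)

end SigGraph

/-- The nontrivial part of a multiset of intervals. -/
noncomputable def nontriv (M : Multiset (EReal × EReal)) : Multiset (EReal × EReal) :=
  M.filter fun ab => ab.1 < ab.2

/-- The 0-low-persistence filter associated to a BHT `(p, L)` rooted at `r`. -/
noncomputable def LPF {V : Type*} [Fintype V] (f : V → ℝ) (r : V) (p L : V → V)
    (ε : ℝ) (v : V) : ℝ :=
  (insert (f v) ((Finset.univ.filter fun u => Anc p u v ∧ persBHT f r L u < (ε : EReal)).image
    fun u => f (L u))).max' (Finset.insert_nonempty _ _)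

namespace SigGraph

variable {V E : Type*} (G : SigGraph V E)

/-- Connectivity within the sublevel graph `G_t` of all elements with signal
value `≤ t`. -/
def ConnVal (f : V → ℝ) (t : ℝ) (a b : V) : Prop :=
  f a ≤ t ∧ f b ≤ t ∧
    Relation.ReflTransGen
      (fun x y => ∃ e, f (G.src e) ≤ t ∧ f (G.tgt e) ≤ t ∧ G.Ends e x y) a b

end SigGraph

/-!
For `x ≠ r` let `k x` (`deathPos`) be the position of the edge at which the component born
at `x` dies. Along a parent chain `k` strictly increases, so every descendant of `v` is
connected to `v` in `G_{<k v}`. Conversely, a vertex `w ≠ v` of that component dies before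
`k v`, and its parent stays in the component with a smaller position, so induction on the
position shows `v ⪯_T w`. Finally `f(𝔏(v))` is the signal value of the death edge of `v`, so
`t < f(𝔏(v))` gives `G_t ⊆ G_{<k v}`.
-/

lemma ne_of_iterate_eq_ne {α : Type*} {p : α → α} {r x v : α} {n : ℕ} (hfix : p r = r)
    (hv : v ≠ r) (h : p^[n] x = v) : x ≠ r := by
  rintro rfl
  exact hv (h.symm.trans (Function.iterate_fixed hfix n))

namespace SigGraph

variable {V E : Type*} {G : SigGraph V E} {pos : V ⊕ E → ℕ} {k k' : ℕ} {a b c : V}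

lemma Ends.symm {e : E} (h : G.Ends e a b) : G.Ends e b a :=
  Or.symm h

lemma ConnB.refl (h : pos (.inl a) < k) : G.ConnB pos k a a :=
  ⟨h, h, .refl⟩

lemma ConnB.symm (h : G.ConnB pos k a b) : G.ConnB pos k b a :=
  ⟨h.2.1, h.1, Relation.ReflTransGen.mono (fun _ _ ⟨e, he, hxy⟩ => ⟨e, he, hxy.symm⟩) _ _
    (Relation.reflTransGen_swap.mpr h.2.2)⟩

lemma ConnB.trans (h₁ : G.ConnB pos k a b) (h₂ : G.ConnB pos k b c) : G.ConnB pos k a c :=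
  ⟨h₁.1, h₂.2.1, h₁.2.2.trans h₂.2.2⟩

lemma ConnB.mono (hk : k ≤ k') (h : G.ConnB pos k a b) : G.ConnB pos k' a b :=
  ⟨h.1.trans_le hk, h.2.1.trans_le hk,
    Relation.ReflTransGen.mono (fun _ _ ⟨e, he, hxy⟩ => ⟨e, he.trans_le hk, hxy⟩) _ _
      h.2.2⟩

lemma ConnVal.connB {f : V → ℝ} {t : ℝ} (hsub : ∀ x, G.sig f x ≤ t → pos x < k)
    (h : G.ConnVal f t a b) : G.ConnB pos k a b :=
  ⟨hsub (.inl a) h.1, hsub (.inl b) h.2.1, Relation.ReflTransGen.mono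
    (fun _ _ ⟨e, hs, ht, hxy⟩ => ⟨e, hsub (.inr e) (max_le hs ht), hxy⟩) _ _ h.2.2⟩

lemma IsGOrdering.pos_lt_of_sig_lt {f : V → ℝ} (hO : G.IsGOrdering f pos) {x y : V ⊕ E}
    (h : G.sig f x < G.sig f y) : pos x < pos y :=
  lt_of_not_ge fun hle => (hO.2.1 y x hle).not_gt h

lemma IsGOrdering.f_maxEnd {f : V → ℝ} (hO : G.IsGOrdering f pos) (e : E) :
    f (G.maxEnd pos e) = G.sig f (.inr e) := by
  unfold maxEnd
  split_ifs with h
  · exact (max_eq_right (hO.2.1 _ _ h)).symm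
  · exact (max_eq_left (hO.2.1 _ _ (le_of_not_ge h))).symm

namespace IsBHT

variable {f : V → ℝ} {r x u v : V} {p L : V → V}

noncomputable def deathPos (hT : G.IsBHT f pos r p L) (x : V) : ℕ :=
  if hx : x = r then 0 else pos (.inr (hT.spec x hx).choose)

lemma isCompMin_deathPos (hT : G.IsBHT f pos r p L) (hx : x ≠ r) :
    G.IsCompMin pos (hT.deathPos x) x x := by
  simpa only [deathPos, dif_neg hx] using (hT.spec x hx).choose_spec.1

lemma isCompMin_parent (hT : G.IsBHT f pos r p L) (hx : x ≠ r) :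
    G.IsCompMin pos (hT.deathPos x + 1) (p x) x := by
  simpa only [deathPos, dif_neg hx] using (hT.spec x hx).choose_spec.2.1

lemma pos_lt_deathPos (hT : G.IsBHT f pos r p L) (hx : x ≠ r) {y : V ⊕ E}
    (hy : G.sig f y < f (L x)) : pos y < hT.deathPos x := by
  obtain ⟨-, -, hL⟩ := (hT.spec x hx).choose_spec
  rw [hL, hT.ordering.f_maxEnd] at hy
  simpa only [deathPos, dif_neg hx] using hT.ordering.pos_lt_of_sig_lt hy

lemma pos_parent_lt (hT : G.IsBHT f pos r p L) (hx : x ≠ r) :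
    pos (.inl (p x)) < pos (.inl x) := by
  have hpx : p x ≠ x := fun h => by
    obtain ⟨n, hn⟩ := hT.reaches x
    exact hx ((Function.iterate_fixed h n).symm.trans hn)
  have hle := (hT.isCompMin_parent hx).2 x (ConnB.refl (hT.isCompMin_parent hx).1.2.1)
  exact hle.lt_of_ne fun h => hpx (Sum.inl_injective (hT.ordering.1 h))

-- Otherwise `p (p x)` would lie in the component of `x` in `G_{<k x + 1}`, below its minimum `p x`.
lemma deathPos_lt_parent (hT : G.IsBHT f pos r p L) (hx : x ≠ r) (hpx : p x ≠ r) :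
    hT.deathPos x < hT.deathPos (p x) := by
  by_contra! hle
  have hconn : G.ConnB pos (hT.deathPos x + 1) x (p (p x)) :=
    (hT.isCompMin_parent hx).1.symm.trans ((hT.isCompMin_parent hpx).1.mono (by omega)).symm
  have := (hT.isCompMin_parent hx).2 _ hconn
  have := hT.pos_parent_lt hpx
  omega

lemma deathPos_lt_of_iterate (hT : G.IsBHT f pos r p L) (hv : v ≠ r) {n : ℕ}
    (h : p^[n] u = v) (huv : u ≠ v) : hT.deathPos u < hT.deathPos v := by
  induction n generalizing u with
  | zero => exact absurd h huv
  | succ n ih =>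
    have hu : u ≠ r := ne_of_iterate_eq_ne hT.root_fix hv h
    rw [Function.iterate_succ_apply] at h
    have hlt := hT.deathPos_lt_parent hu (ne_of_iterate_eq_ne hT.root_fix hv h)
    obtain hpu | hpu := eq_or_ne (p u) v
    · rwa [hpu] at hlt
    · exact hlt.trans (ih h hpu)

lemma connB_deathPos_of_iterate (hT : G.IsBHT f pos r p L) (hv : v ≠ r) {n : ℕ}
    (h : p^[n] u = v) : G.ConnB pos (hT.deathPos v) v u := by
  induction n generalizing u with
  | zero => exact h ▸ (hT.isCompMin_deathPos hv).1
  | succ n ih =>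
    obtain rfl | huv := eq_or_ne u v
    · exact (hT.isCompMin_deathPos hv).1
    have hku := hT.deathPos_lt_of_iterate hv h huv
    have hu : u ≠ r := ne_of_iterate_eq_ne hT.root_fix hv h
    rw [Function.iterate_succ_apply] at h
    exact (ih h).trans ((hT.isCompMin_parent hu).1.mono hku)

theorem anc_of_connB_deathPos (hT : G.IsBHT f pos r p L) (hv : v ≠ r) {w : V}
    (hw : G.ConnB pos (hT.deathPos v) v w) : Anc p v w := by
  obtain rfl | hwv := eq_or_ne w v
  · exact ⟨0, rfl⟩
  have hvw : pos (.inl v) < pos (.inl w) :=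
    ((hT.isCompMin_deathPos hv).2 w hw).lt_of_ne fun h =>
      hwv (Sum.inl_injective (hT.ordering.1 h)).symm
  have hwr : w ≠ r := by
    rintro rfl
    exact absurd (hT.root_min v) (not_le.mpr hvw)
  have hkw : hT.deathPos w < hT.deathPos v := by
    by_contra! hle
    have := (hT.isCompMin_deathPos hwr).2 v (hw.symm.mono hle)
    omega
  obtain ⟨m, hm⟩ :=
    hT.anc_of_connB_deathPos hv (hw.trans ((hT.isCompMin_parent hwr).1.symm.mono hkw))
  exact ⟨m + 1, by rw [Function.iterate_succ_apply, hm]⟩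
termination_by pos (.inl w)
decreasing_by exact hT.pos_parent_lt hwr

end IsBHT

end SigGraph

theorem bht_component_ancestor_general {V E : Type*}
    (G : SigGraph V E) (f : V → ℝ) (pos : V ⊕ E → ℕ)
    (r : V) (p L : V → V) (hbht : G.IsBHT f pos r p L)
    (u v w : V) (hanc : Anc p v u)
    (t : ℝ) (ht : (t : EReal) < fLink f r L v)
    (hconn : G.ConnVal f t u w) :
    Anc p v w := by
  by_cases hvr : v = r
  · exact hvr ▸ hbht.reaches w
  have htL : t < f (L v) := by
    simpa only [fLink, if_neg hvr, EReal.coe_lt_coe_iff] using ht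
  have huw : G.ConnB pos (hbht.deathPos v) u w :=
    hconn.connB fun y hy => hbht.pos_lt_deathPos hvr (hy.trans_lt htL)
  obtain ⟨n, hn⟩ := hanc
  exact hbht.anc_of_connB_deathPos hvr ((hbht.connB_deathPos_of_iterate hvr hn).trans huw)

/-- If `v ≺_T u` is a strict ancestor in a Basin Hierarchy Tree and `w` lies in the
same connected component as `u` in the sublevel graph `G_t` for some threshold
`t < f(𝔏(v))`, then `v ⪯_T w`. -/
theorem bht_component_ancestor {V E : Type*} [Fintype V] [Fintype E]
    (G : SigGraph V E) (hG : G.Connected) (f : V → ℝ) (pos : V ⊕ E → ℕ)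
    (r : V) (p L : V → V) (hbht : G.IsBHT f pos r p L)
    (u v w : V) (hanc : Anc p v u) (hne : v ≠ u)
    (t : ℝ) (ht : (t : EReal) < fLink f r L v)
    (hconn : G.ConnVal f t u w) :
    Anc p v w :=
  bht_component_ancestor_general G f pos r p L hbht u v w hanc t ht hconn
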